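/- Let L, L_*, L_0, L_1 be four Lagrangian subspaces of a 2n-dimensional real symplectic vector space (V,ω), with L_0 and L_1 complementary to each other, L complementary to L_0, and L_* complementary to both L and L_0. Then, as symmetric bilinear forms on L_1, φ_{L_1,L_0}(L_*) − φ_{L_1,L_0}(L) = (ρ_{L_0,L_1})* ∘ φ_{L_0,L_*}(L)^{-1} ∘ ρ_{L_0,L_1}, where φ_{L_0,L_*}(L)^{-1} denotes the inverse of the (invertible) linear map L_0 → L_0^* associated to the bilinear form φ_{L_0,L_*}(L). -/

import Mathlib

noncomputable section

/-- `B` is negative definite on the subspace `W`. -/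
def negDefOn {M : Type*} [AddCommGroup M] [Module ℝ M]
    (B : M → M → ℝ) (W : Submodule ℝ M) : Prop :=
  ∀ v ∈ W, v ≠ 0 → B v v < 0

def hasNegIdxOn {M : Type*} [AddCommGroup M] [Module ℝ M]
    (B : M → M → ℝ) (S : Set M) (m : ℕ) : Prop :=
  (∃ W : Submodule ℝ M, (W : Set M) ⊆ S ∧ negDefOn B W ∧ Module.rank ℝ W = m) ∧
  (∀ W : Submodule ℝ M, (W : Set M) ⊆ S → negDefOn B W → Module.rank ℝ W ≤ m)

def hasPosIdxOn {M : Type*} [AddCommGroup M] [Module ℝ M]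
    (B : M → M → ℝ) (S : Set M) (m : ℕ) : Prop :=
  hasNegIdxOn (fun x y => - B x y) S m

/-- `L` is a Lagrangian subspace of the `2n`-dimensional symplectic space `(V, ω)`:
an `n`-dimensional subspace on which `ω` vanishes identically. -/
def IsLagrangian {V : Type*} [AddCommGroup V] [Module ℝ V]
    (ω : V →ₗ[ℝ] V →ₗ[ℝ] ℝ) (n : ℕ) (L : Submodule ℝ V) : Prop :=
  (∀ x ∈ L, ∀ y ∈ L, ω x y = 0) ∧ Module.finrank ℝ L = n


/-- Let `L, L_*, L₀, L₁` be Lagrangian subspaces of a `2n`-dimensional real symplectic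
space `(V, ω)`, with `L₀, L₁` complementary, `L` complementary to `L₀`, `L_*`
complementary to both `L` and `L₀`.  Let `T, S_* : L₁ → L₀` be the linear maps whose
graphs in `L₁ ⊕ L₀` are `L` and `L_*` respectively, and let `U : L₀ → L_*` be the linear
map whose graph in `L₀ ⊕ L_*` is `L`.  Then, as symmetric bilinear forms on `L₁`,
`φ_{L₁,L₀}(L_*) − φ_{L₁,L₀}(L) = (ρ_{L₀,L₁})* ∘ φ_{L₀,L_*}(L)⁻¹ ∘ ρ_{L₀,L₁}`,
i.e. `ω(S_* u, u') − ω(T u, u') = ω(u', z)` where `z = φ_{L₀,L_*}(L)⁻¹(ρ_{L₀,L₁} u)` is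
the unique element of `L₀` with `ω(U z, ·) = ω(u, ·)` on `L₀` (such `z` exists for each
`u ∈ L₁`, the linear map `L₀ → L₀*` associated to `φ_{L₀,L_*}(L)` being invertible). -/
theorem lagrangian_chart_difference_formula
    {V : Type*} [AddCommGroup V] [Module ℝ V] [FiniteDimensional ℝ V]
    (n : ℕ) (hV : Module.finrank ℝ V = 2 * n)
    (ω : V →ₗ[ℝ] V →ₗ[ℝ] ℝ)
    (halt : ∀ x : V, ω x x = 0)
    (hnd : ∀ x : V, (∀ y : V, ω x y = 0) → x = 0)
    (L Lst L₀ L₁ : Submodule ℝ V)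
    (hL : IsLagrangian ω n L) (hLst : IsLagrangian ω n Lst)
    (hL₀ : IsLagrangian ω n L₀) (hL₁ : IsLagrangian ω n L₁)
    (hcompl01 : IsCompl L₀ L₁)
    (hcomplL0 : IsCompl L L₀)
    (hcomplstL : IsCompl Lst L)
    (hcomplst0 : IsCompl Lst L₀)
    -- `T : L₁ → L₀` has graph `L` in `L₁ ⊕ L₀`
    (T : L₁ →ₗ[ℝ] L₀)
    (hT : ∀ x : V, x ∈ L ↔ ∃ u : L₁, x = (u : V) + (T u : V))
    -- `S_* : L₁ → L₀` has graph `L_*` in `L₁ ⊕ L₀`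
    (Sst : L₁ →ₗ[ℝ] L₀)
    (hSst : ∀ x : V, x ∈ Lst ↔ ∃ u : L₁, x = (u : V) + (Sst u : V))
    -- `U : L₀ → L_*` has graph `L` in `L₀ ⊕ L_*`
    (U : L₀ →ₗ[ℝ] V)
    (hUrange : ∀ z : L₀, U z ∈ Lst)
    (hU : ∀ x : V, x ∈ L ↔ ∃ z : L₀, x = (z : V) + U z) :
    -- `φ_{L₀,L_*}(L)` is invertible …
    (∀ u : L₁, ∃ z : L₀, ∀ w ∈ L₀, ω (U z) w = ω (u : V) w) ∧
    -- … and `φ_{L₁,L₀}(L_*) − φ_{L₁,L₀}(L) = (ρ_{L₀,L₁})* ∘ φ_{L₀,L_*}(L)⁻¹ ∘ ρ_{L₀,L₁}`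
    (∀ (u u' : L₁) (z : L₀), (∀ w ∈ L₀, ω (U z) w = ω (u : V) w) →
      ω (Sst u : V) (u' : V) - ω (T u : V) (u' : V) = ω (u' : V) (z : V)) := by
  -- skew-symmetry
  have skew : ∀ x y : V, ω x y = - ω y x := by
    intro x y
    have h := halt (x + y)
    simp only [map_add, LinearMap.add_apply, halt] at h
    linarith
  -- the map F : L₀ → Dual L₀ associated to φ_{L₀,L_*}(L)
  set F : L₀ →ₗ[ℝ] Module.Dual ℝ L₀ := ((ω.compl₂ L₀.subtype).comp U) with hF
  have hFapp : ∀ (z w : L₀), F z w = ω (U z) w := fun z w => rfl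
  have hFinj : Function.Injective F := by
    rw [← LinearMap.ker_eq_bot, Submodule.eq_bot_iff]
    intro z hz
    have hz0 : ∀ w : L₀, ω (U z) w = 0 := by
      intro w
      have : F z w = 0 := by rw [hz]; rfl
      simpa [hFapp] using this
    have hxL : (z : V) + U z ∈ L := (hU _).2 ⟨z, rfl⟩
    have hx0 : ((z : V) + U z) = 0 := by
      apply hnd
      intro y
      obtain ⟨yL, y0, hyL, hy0, rfl⟩ :=
        Submodule.codisjoint_iff_exists_add_eq.mp hcomplL0.codisjoint y
      rw [map_add]
      have h1 : ω ((z : V) + U z) yL = 0 := hL.1 _ hxL _ hyL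
      have h2 : ω ((z : V) + U z) y0 = 0 := by
        rw [map_add, LinearMap.add_apply]
        have := hz0 ⟨y0, hy0⟩
        simp only [Submodule.coe_mk] at this
        rw [this, hL₀.1 _ z.2 _ hy0, add_zero]
      rw [h1, h2, add_zero]
    have hzst : (z : V) ∈ Lst := by
      have : (z : V) = -(U z) := eq_neg_of_add_eq_zero_left hx0
      rw [this]; exact neg_mem (hUrange z)
    have : (z : V) ∈ Lst ⊓ L₀ := ⟨hzst, z.2⟩
    rw [hcomplst0.inf_eq_bot] at this
    exact Subtype.ext this
  have hFsurj : Function.Surjective F := by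
    have hfr : Module.finrank ℝ L₀ = Module.finrank ℝ (Module.Dual ℝ L₀) :=
      Subspace.dual_finrank_eq.symm
    exact (LinearMap.injective_iff_surjective_of_finrank_eq_finrank hfr).1 hFinj
  constructor
  · intro u
    obtain ⟨z, hz⟩ := hFsurj ((ω (u : V)).comp L₀.subtype)
    refine ⟨z, fun w hw => ?_⟩
    have := LinearMap.congr_fun hz ⟨w, hw⟩
    simpa [hFapp] using this
  · intro u u' z hz
    -- decompose U z over L₁
    obtain ⟨v, hv⟩ := (hSst (U z)).1 (hUrange z)
    have hxL : (z : V) + U z ∈ L := (hU _).2 ⟨z, rfl⟩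
    obtain ⟨u₂, hu₂⟩ := (hT _).1 hxL
    -- uniqueness of decomposition in L₀ ⊕ L₁ : v = u₂
    have hgr : (z : V) + ((v : V) + (Sst v : V)) = (u₂ : V) + (T u₂ : V) := by
      rw [← hv]; exact hu₂
    have hdec : (v : V) - (u₂ : V) = (T u₂ : V) - (Sst v : V) - (z : V) := by
      have h0 : (v : V) - (u₂ : V) - ((T u₂ : V) - (Sst v : V) - (z : V)) = 0 := by
        calc (v : V) - (u₂ : V) - ((T u₂ : V) - (Sst v : V) - (z : V))
            = (z : V) + ((v : V) + (Sst v : V)) - ((u₂ : V) + (T u₂ : V)) := by abel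
          _ = 0 := by rw [hgr]; abel
      exact sub_eq_zero.mp h0
    have hveq : (v : V) = (u₂ : V) := by
      have h1 : (v : V) - (u₂ : V) ∈ L₁ := sub_mem v.2 u₂.2
      have h0 : (v : V) - (u₂ : V) ∈ L₀ := by
        rw [hdec]; exact sub_mem (sub_mem (T u₂).2 (Sst v).2) z.2
      have hm : (v : V) - (u₂ : V) ∈ L₀ ⊓ L₁ := ⟨h0, h1⟩
      rw [hcompl01.inf_eq_bot] at hm
      exact sub_eq_zero.mp hm
    have hzval : (z : V) = (T v : V) - (Sst v : V) := by
      have hTv : (T v : V) = (T u₂ : V) := by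
        congr 1; exact congrArg T (Subtype.ext hveq)
      rw [hTv]
      have h0 : (z : V) - ((T u₂ : V) - (Sst v : V)) = 0 := by
        calc (z : V) - ((T u₂ : V) - (Sst v : V))
            = (z : V) + ((v : V) + (Sst v : V)) - ((u₂ : V) + (T u₂ : V))
              - ((v : V) - (u₂ : V)) := by abel
          _ = 0 := by rw [hgr, sub_eq_zero.mpr hveq]; abel
      exact sub_eq_zero.mp h0
    -- v = u
    have hvu : (v : V) = (u : V) := by
      have hb : ∀ y : V, ω ((v : V) - (u : V)) y = 0 := by
        intro y
        obtain ⟨y0, y1, hy0, hy1, rfl⟩ :=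
          Submodule.codisjoint_iff_exists_add_eq.mp hcompl01.codisjoint y
        have hv0 : ω (v : V) y0 = ω (u : V) y0 := by
          have hUz : ω (U z) y0 = ω (v : V) y0 + ω (Sst v : V) y0 := by
            rw [hv, map_add, LinearMap.add_apply]
          have hS0 : ω (Sst v : V) y0 = 0 := hL₀.1 _ (Sst v).2 _ hy0
          have := hz y0 hy0
          rw [hUz, hS0, add_zero] at this
          exact this
        have hv1 : ω (v : V) y1 = 0 := hL₁.1 _ v.2 _ hy1
        have hu1 : ω (u : V) y1 = 0 := hL₁.1 _ u.2 _ hy1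
        simp only [map_sub, map_add, LinearMap.sub_apply, LinearMap.add_apply]
        rw [hv0, hv1, hu1]; ring
      exact sub_eq_zero.mp (hnd _ hb)
    -- conclude
    have hzu : (z : V) = (T u : V) - (Sst u : V) := by
      have hTu : (T v : V) = (T u : V) := by
        congr 1; exact congrArg T (Subtype.ext hvu)
      have hSu : (Sst v : V) = (Sst u : V) := by
        congr 1; exact congrArg Sst (Subtype.ext hvu)
      rw [hzval, hTu, hSu]
    rw [hzu, map_sub]
    rw [skew (u' : V) (T u : V), skew (u' : V) (Sst u : V)]
    ring

end
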